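/- Suppose f satisfies the Lipschitz-in-z condition |f(y,z) − f(y,z')| ≤ λ|z − z'| for all y, z, z' (λ > 0), and let f_n(y,z) = (f(y, q_n(z)) − f⁰)·(n/(π(s) ∨ n)) + f⁰ and similarly f_{n+i}. Then for any y with |y| ≤ r and any z, |f_{n+i}(y,z) − f_n(y,z)| ≤ 2λ|z|·1_{|z| > n} + 2λ|z|·1_{π(s) > n} + 2π(s)·1_{π(s) > n}, where π(s) = sup_{|y| ≤ r+1}|f(y,0) − f⁰| is assumed finite and f⁰ is a fixed vector. -/

import Mathlib

/-! Both `f_n` and `f_{n+i}` have the form `A • (f(y, w) − f⁰) + f⁰` with a scaling factor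
`A ∈ [0, 1]`, so their difference is at most `‖f(y, w') − f(y, w)‖ + |A − B|·‖f(y, w) − f⁰‖`.
The truncations `w = q_n z`, `w' = q_{n+i} z` both equal `z` unless `|z| > n`, and both have norm
at most `|z|`, which gives the first term by the Lipschitz bound. The factors agree (both `1`)
unless `π > n`, and otherwise `|A − B| ≤ 1` while `‖f(y, w) − f⁰‖ ≤ λ|z| + π`. -/

lemma div_max_nonneg {a m : ℝ} (hm : 0 ≤ m) : 0 ≤ m / max a m :=
  div_nonneg hm (hm.trans (le_max_right a m))

lemma div_max_le_one {a m : ℝ} (hm : 0 ≤ m) : m / max a m ≤ 1 :=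
  div_le_one_of_le₀ (le_max_right a m) (hm.trans (le_max_right a m))

lemma div_max_eq_one {a m : ℝ} (hm : 0 < m) (ha : a ≤ m) : m / max a m = 1 := by
  rw [max_eq_right ha, div_self hm.ne']

lemma abs_sub_div_max_le {a m m' : ℝ} (hm : 0 < m) (hmm' : m ≤ m') :
    |m' / max a m' - m / max a m| ≤ if m < a then 1 else 0 := by
  split_ifs with ha
  · have h' := div_max_nonneg (a := a) (hm.le.trans hmm')
    have h'₁ := div_max_le_one (a := a) (hm.le.trans hmm')
    have h := div_max_nonneg (a := a) hm.le
    have h₁ := div_max_le_one (a := a) hm.le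
    rw [abs_le]
    constructor <;> linarith
  · replace ha := not_lt.mp ha
    rw [div_max_eq_one hm ha, div_max_eq_one (hm.trans_le hmm') (ha.trans hmm'), sub_self,
      abs_zero]

section Truncation

variable {E F : Type*} [NormedAddCommGroup E] [NormedAddCommGroup F] {g : E → F} {lam : ℝ}

lemma norm_apply_sub_le_of_lipschitz (hlam : 0 ≤ lam) (hlip : ∀ z z', ‖g z - g z'‖ ≤ lam * ‖z - z'‖)
    {c : F} {b : ℝ} (hb : ‖g 0 - c‖ ≤ b) {w z : E} (hw : ‖w‖ ≤ ‖z‖) :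
    ‖g w - c‖ ≤ lam * ‖z‖ + b :=
  calc ‖g w - c‖ ≤ ‖g w - g 0‖ + ‖g 0 - c‖ := norm_sub_le_norm_sub_add_norm_sub _ _ _
    _ ≤ lam * ‖w‖ + b := by simpa only [sub_zero] using add_le_add (hlip w 0) hb
    _ ≤ lam * ‖z‖ + b := by gcongr

variable [NormedSpace ℝ E]

lemma norm_div_max_smul_le {m : ℝ} (hm : 0 ≤ m) (z : E) : ‖(m / max ‖z‖ m) • z‖ ≤ ‖z‖ := by
  rw [norm_smul, Real.norm_of_nonneg (div_max_nonneg hm)]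
  exact mul_le_of_le_one_left (norm_nonneg z) (div_max_le_one hm)

lemma div_max_smul_eq_self {m : ℝ} (hm : 0 < m) {z : E} (hz : ‖z‖ ≤ m) :
    (m / max ‖z‖ m) • z = z := by
  rw [div_max_eq_one hm hz, one_smul]

lemma norm_sub_div_max_smul_le (hlam : 0 ≤ lam)
    (hlip : ∀ z z', ‖g z - g z'‖ ≤ lam * ‖z - z'‖) {m m' : ℝ} (hm : 0 < m) (hmm' : m ≤ m')
    (z : E) :
    ‖g ((m' / max ‖z‖ m') • z) - g ((m / max ‖z‖ m) • z)‖ ≤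
      if m < ‖z‖ then 2 * lam * ‖z‖ else 0 := by
  split_ifs with hz
  · calc _ ≤ lam * ‖(m' / max ‖z‖ m') • z - (m / max ‖z‖ m) • z‖ := hlip _ _
      _ ≤ lam * (‖z‖ + ‖z‖) := by
        gcongr
        exact (norm_sub_le _ _).trans (add_le_add (norm_div_max_smul_le (hm.le.trans hmm') z)
          (norm_div_max_smul_le hm.le z))
      _ = 2 * lam * ‖z‖ := by ring
  · replace hz := not_lt.mp hz
    rw [div_max_smul_eq_self hm hz, div_max_smul_eq_self (hm.trans_le hmm') (hz.trans hmm'),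
      sub_self, norm_zero]

end Truncation

lemma norm_smul_add_sub_smul_add_le {F : Type*} [NormedAddCommGroup F] [NormedSpace ℝ F]
    {A B : ℝ} (hA₀ : 0 ≤ A) (hA₁ : A ≤ 1) (u v c : F) :
    ‖(A • u + c) - (B • v + c)‖ ≤ ‖u - v‖ + |A - B| * ‖v‖ := by
  have hsplit : (A • u + c) - (B • v + c) = A • (u - v) + (A - B) • v := by
    rw [smul_sub, sub_smul]; abel
  calc _ ≤ ‖A • (u - v)‖ + ‖(A - B) • v‖ := hsplit ▸ norm_add_le _ _
    _ = A * ‖u - v‖ + |A - B| * ‖v‖ := by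
      rw [norm_smul, norm_smul, Real.norm_of_nonneg hA₀, Real.norm_eq_abs]
    _ ≤ ‖u - v‖ + |A - B| * ‖v‖ := by
      gcongr
      exact mul_le_of_le_one_left (norm_nonneg _) hA₁

theorem stmt_10_general (k d : ℕ) (n i : ℕ) (hn : 1 ≤ n)
    (lam r π : ℝ) (hlam : 0 < lam)
    (f : EuclideanSpace ℝ (Fin k) → EuclideanSpace ℝ (Fin k × Fin d) →
      EuclideanSpace ℝ (Fin k))
    (f0 : EuclideanSpace ℝ (Fin k))
    (hlip : ∀ y z z', ‖f y z - f y z'‖ ≤ lam * ‖z - z'‖)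
    (hπbound : ∀ y : EuclideanSpace ℝ (Fin k), ‖y‖ ≤ r + 1 → ‖f y 0 - f0‖ ≤ π)
    (q : ℕ → EuclideanSpace ℝ (Fin k × Fin d) → EuclideanSpace ℝ (Fin k × Fin d))
    (hq : q = fun (m : ℕ) z => ((m : ℝ) / max ‖z‖ (m : ℝ)) • z)
    (fn : ℕ → EuclideanSpace ℝ (Fin k) → EuclideanSpace ℝ (Fin k × Fin d) →
      EuclideanSpace ℝ (Fin k))
    (hfn : fn = fun (m : ℕ) y z => ((m : ℝ) / max π (m : ℝ)) • (f y (q m z) - f0) + f0) :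
    ∀ y, ‖y‖ ≤ r → ∀ z,
      ‖fn (n + i) y z - fn n y z‖ ≤
        (if (n : ℝ) < ‖z‖ then 2 * lam * ‖z‖ else 0)
          + (if (n : ℝ) < π then 2 * lam * ‖z‖ else 0)
          + (if (n : ℝ) < π then 2 * π else 0) := by
  subst hq hfn
  intro y hy z
  have hn0 : (0 : ℝ) < n := by exact_mod_cast hn
  have hnm : (n : ℝ) ≤ ((n + i : ℕ) : ℝ) := by exact_mod_cast n.le_add_right i
  have hm0 := hn0.trans_le hnm
  have hgw : ‖f y (((n : ℝ) / max ‖z‖ n) • z) - f0‖ ≤ lam * ‖z‖ + π :=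
    norm_apply_sub_le_of_lipschitz hlam.le (hlip y) (hπbound y (by linarith))
      (norm_div_max_smul_le hn0.le z)
  calc _ ≤ _ := norm_smul_add_sub_smul_add_le (div_max_nonneg hm0.le) (div_max_le_one hm0.le) _ _ _
    _ ≤ (if (n : ℝ) < ‖z‖ then 2 * lam * ‖z‖ else 0)
          + (if (n : ℝ) < π then 1 else 0) * (lam * ‖z‖ + π) := by
      rw [sub_sub_sub_cancel_right]
      gcongr
      · exact norm_sub_div_max_smul_le hlam.le (hlip y) hn0 hnm z
      · exact abs_sub_div_max_le hn0 hnm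
    _ ≤ _ := by
      have hz := norm_nonneg z
      split_ifs <;> nlinarith

/-- If `f` is `λ`-Lipschitz in `z` and
`f_n(y,z) = (n/(π∨n))·(f(y, q_n(z)) − f⁰) + f⁰` with
`π ≥ sup_{|y| ≤ r+1} |f(y,0) − f⁰|`, then for `|y| ≤ r`,
`|f_{n+i}(y,z) − f_n(y,z)| ≤ 2λ|z|·1_{|z|>n} + 2λ|z|·1_{π>n} + 2π·1_{π>n}`. -/
theorem stmt_10 (k d : ℕ) (n i : ℕ) (hn : 1 ≤ n) (hi : 1 ≤ i)
    (lam r π : ℝ) (hlam : 0 < lam) (hr : 0 < r) (hπ : 0 ≤ π)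
    (f : EuclideanSpace ℝ (Fin k) → EuclideanSpace ℝ (Fin k × Fin d) →
      EuclideanSpace ℝ (Fin k))
    (f0 : EuclideanSpace ℝ (Fin k))
    (hlip : ∀ y z z', ‖f y z - f y z'‖ ≤ lam * ‖z - z'‖)
    (hπbound : ∀ y : EuclideanSpace ℝ (Fin k), ‖y‖ ≤ r + 1 → ‖f y 0 - f0‖ ≤ π)
    (q : ℕ → EuclideanSpace ℝ (Fin k × Fin d) → EuclideanSpace ℝ (Fin k × Fin d))
    (hq : q = fun (m : ℕ) z => ((m : ℝ) / max ‖z‖ (m : ℝ)) • z)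
    (fn : ℕ → EuclideanSpace ℝ (Fin k) → EuclideanSpace ℝ (Fin k × Fin d) →
      EuclideanSpace ℝ (Fin k))
    (hfn : fn = fun (m : ℕ) y z => ((m : ℝ) / max π (m : ℝ)) • (f y (q m z) - f0) + f0) :
    ∀ y, ‖y‖ ≤ r → ∀ z,
      ‖fn (n + i) y z - fn n y z‖ ≤
        (if (n : ℝ) < ‖z‖ then 2 * lam * ‖z‖ else 0)
          + (if (n : ℝ) < π then 2 * lam * ‖z‖ else 0)
          + (if (n : ℝ) < π then 2 * π else 0) :=
  stmt_10_general k d n i hn lam r π hlam f f0 hlip hπbound q hq fn hfn
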